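/- Let X ~ Poisson(m·p) and Y ~ Poisson(m·q) be independent, and let J = X + Y ~ Poisson(λ) with λ = m(p+q) > 0, δ = (p−q)/(p+q). Then E[((X−Y)² − J)/J · 1{J ≥ 1}] = δ² (λ − 1 + e^{-λ}). -/

import Mathlib

/-!
Split the double series along the antidiagonals `x + y = j`. Given `J = j`, `X` is binomial
with parameters `j` and `a / (a + b)`, and the first two factorial moments of the binomial
distribution show that the statistic has conditional mean `(j - 1) δ²` for `j ≥ 1`. It remains
to compute `E[(J - 1) 1{J ≥ 1}] = λ - 1 + e^{-λ}` for `J ~ Poisson(λ)`.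
-/

/-- The Poisson probability mass function with rate `lam`. -/
noncomputable def poissonPMFReal (lam : ℝ) (k : ℕ) : ℝ :=
  Real.exp (-lam) * lam ^ k / (Nat.factorial k)

open Finset Nat

section BinomialMoments

variable {R : Type*} [CommRing R] (a b : R)

theorem sum_range_succ_choose_mul_cast_mul (j : ℕ) (f : ℕ → R) :
    ∑ x ∈ range (j + 2), ((j + 1).choose x : R) * a ^ x * b ^ (j + 1 - x) * (x * f x) =
      (j + 1) * a * ∑ x ∈ range (j + 1), (j.choose x : R) * a ^ x * b ^ (j - x) * f (x + 1) := by
  rw [sum_range_succ', mul_sum]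
  simp only [Nat.cast_zero, zero_mul, mul_zero, add_zero]
  refine sum_congr rfl fun x _ => ?_
  have h : ((j + 1 : ℕ) : R) * j.choose x = (j + 1).choose (x + 1) * (x + 1 : ℕ) := by
    exact_mod_cast congrArg (Nat.cast (R := R)) (add_one_mul_choose_eq j x)
  rw [Nat.add_sub_add_right]
  push_cast at h ⊢
  linear_combination (-(a ^ x * b ^ (j - x) * a * f (x + 1))) * h

theorem add_pow_mul_sum_range_choose_mul_descFactorial (k j : ℕ) :
    (a + b) ^ k * ∑ x ∈ range (j + 1), (j.choose x : R) * a ^ x * b ^ (j - x) * x.descFactorial k =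
      j.descFactorial k * a ^ k * (a + b) ^ j := by
  induction k generalizing j with
  | zero =>
    simp only [pow_zero, descFactorial_zero, cast_one, mul_one, one_mul, add_pow]
    exact sum_congr rfl fun x _ => by ring
  | succ k ih =>
    cases j with
    | zero => simp
    | succ i =>
      have hf (x : ℕ) : (x.descFactorial (k + 1) : R) = x * ((x - 1).descFactorial k : ℕ) := by
        rcases x with _ | y
        · simp
        · rw [succ_descFactorial_succ, Nat.add_sub_cancel]
          push_cast
          rfl
      simp only [hf, sum_range_succ_choose_mul_cast_mul, Nat.add_sub_cancel,
        succ_descFactorial_succ]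
      push_cast
      linear_combination ((i + 1 : R) * a * (a + b)) * ih i

theorem add_sq_mul_sum_range_choose_mul_two_mul_sub_sq_sub (j : ℕ) :
    (a + b) ^ 2 * ∑ x ∈ range (j + 1),
        (j.choose x : R) * a ^ x * b ^ (j - x) * ((2 * x - j) ^ 2 - j) =
      j * (j - 1) * (a - b) ^ 2 * (a + b) ^ j := by
  have h0 := add_pow_mul_sum_range_choose_mul_descFactorial a b 0 j
  have h1 := add_pow_mul_sum_range_choose_mul_descFactorial a b 1 j
  have h2 := add_pow_mul_sum_range_choose_mul_descFactorial a b 2 j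
  simp only [cast_descFactorial_two, descFactorial_one, descFactorial_zero, cast_one,
    mul_one] at h0 h1 h2
  have hsum : ∑ x ∈ range (j + 1), (j.choose x : R) * a ^ x * b ^ (j - x) * ((2 * x - j) ^ 2 - j) =
      4 * ∑ x ∈ range (j + 1), (j.choose x : R) * a ^ x * b ^ (j - x) * (x * (x - 1)) +
      (4 - 4 * j) * ∑ x ∈ range (j + 1), (j.choose x : R) * a ^ x * b ^ (j - x) * x +
      (j ^ 2 - j) * ∑ x ∈ range (j + 1), (j.choose x : R) * a ^ x * b ^ (j - x) := by
    simp only [mul_sum, ← sum_add_distrib]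
    exact sum_congr rfl fun x _ => by ring
  rw [hsum]
  linear_combination 4 * h2 + (4 - 4 * (j : R)) * (a + b) * h1 + ((j : R) ^ 2 - j) * (a + b) ^ 2 * h0

end BinomialMoments

section Poisson

theorem poissonPMFReal_mul_poissonPMFReal (a b : ℝ) (x y : ℕ) :
    poissonPMFReal a x * poissonPMFReal b y =
      Real.exp (-(a + b)) / (x + y)! * (((x + y).choose x : ℝ) * a ^ x * b ^ y) := by
  have hfac : ((x + y).choose x : ℝ) * x ! * y ! = (x + y)! := by
    have h := choose_mul_factorial_mul_factorial (Nat.le_add_right x y)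
    rw [Nat.add_sub_cancel_left] at h
    exact_mod_cast h
  have hchoose : ((x + y).choose x : ℝ) ≠ 0 :=
    cast_ne_zero.mpr (choose_pos (Nat.le_add_right x y)).ne'
  rw [poissonPMFReal, poissonPMFReal, neg_add, Real.exp_add, ← hfac]
  field_simp

theorem add_one_mul_poissonPMFReal_succ (s : ℝ) (n : ℕ) :
    ((n : ℝ) + 1) * poissonPMFReal s (n + 1) = s * poissonPMFReal s n := by
  rw [poissonPMFReal, poissonPMFReal, factorial_succ]
  push_cast
  field_simp
  ring

theorem hasSum_poissonPMFReal (s : ℝ) : HasSum (poissonPMFReal s) 1 := by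
  have h := (NormedSpace.expSeries_div_hasSum_exp s).mul_left (Real.exp (-s))
  rw [← Real.exp_eq_exp_ℝ, ← Real.exp_add, neg_add_cancel, Real.exp_zero] at h
  show HasSum (fun n => poissonPMFReal s n) 1
  simpa only [poissonPMFReal, mul_div_assoc] using h

theorem hasSum_cast_mul_poissonPMFReal (s : ℝ) :
    HasSum (fun n : ℕ => (n : ℝ) * poissonPMFReal s n) s := by
  rw [← hasSum_nat_add_iff' 1]
  simpa [add_one_mul_poissonPMFReal_succ] using (hasSum_poissonPMFReal s).mul_left s

-- `((n - 1 : ℕ) : ℝ)` is `(n - 1) · 1{n ≥ 1}`, by truncated subtraction.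
theorem hasSum_cast_pred_mul_poissonPMFReal (s : ℝ) :
    HasSum (fun n : ℕ => ((n - 1 : ℕ) : ℝ) * poissonPMFReal s n) (s - 1 + Real.exp (-s)) := by
  have h := ((hasSum_cast_mul_poissonPMFReal s).sub (hasSum_poissonPMFReal s)).add
    (hasSum_ite_eq 0 (Real.exp (-s)))
  refine h.congr_fun fun n => ?_
  rcases n with _ | n
  · simp [poissonPMFReal]
  · simp only [add_tsub_cancel_right, cast_add, cast_one, add_eq_zero, one_ne_zero,
      and_false, if_false, add_zero]
    ring

end Poisson

theorem Summable.tsum_tsum_eq_tsum_sum_antidiagonal {E : Type*} [NormedAddCommGroup E]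
    [CompleteSpace E] {f : ℕ × ℕ → E} (hf : Summable f) :
    ∑' (x : ℕ) (y : ℕ), f (x, y) = ∑' n : ℕ, ∑ p ∈ antidiagonal n, f p := by
  let e := HasAntidiagonal.sigmaAntidiagonalEquivProd (A := ℕ)
  rw [← hf.tsum_prod' hf.prod_factor, ← e.tsum_eq f,
    (e.summable_iff.mpr hf).tsum_sigma' (f := fun c => f (e c))
      fun n => (hasSum_fintype _).summable]
  exact tsum_congr fun n => Finset.tsum_subtype _ _

noncomputable def chiStat (x y : ℕ) : ℝ :=
  if 1 ≤ x + y then (((x : ℝ) - y) ^ 2 - (x + y)) / (x + y) else 0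

theorem abs_chiStat_le (x y : ℕ) : |chiStat x y| ≤ (x + 1) * (y + 1) := by
  unfold chiStat
  split_ifs with h
  · have hn : (1 : ℝ) ≤ x + y := by exact_mod_cast h
    have hxy : (0 : ℝ) ≤ x * y := by positivity
    rw [abs_div, abs_of_pos (show (0 : ℝ) < x + y by linarith),
      div_le_iff₀ (show (0 : ℝ) < x + y by linarith), abs_le]
    constructor <;> nlinarith [sq_nonneg ((x : ℝ) - y)]
  · rw [abs_zero]
    positivity

theorem chiStat_sub {x j : ℕ} (hx : x ≤ j) (hj : j ≠ 0) :
    chiStat x (j - x) = ((2 * x - j) ^ 2 - j) / j := by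
  rw [chiStat, Nat.add_sub_cancel' hx, if_pos (one_le_iff_ne_zero.mpr hj), cast_sub hx]
  ring_nf

theorem summable_poissonPMFReal_mul_chiStat (a b : ℝ) :
    Summable fun p : ℕ × ℕ => poissonPMFReal a p.1 * poissonPMFReal b p.2 * chiStat p.1 p.2 := by
  have hmoment (s : ℝ) : Summable fun n : ℕ => ‖((n : ℝ) + 1) * poissonPMFReal s n‖ := by
    refine summable_norm_iff.mpr ?_
    simpa only [add_mul, one_mul] using
      ((hasSum_cast_mul_poissonPMFReal s).add (hasSum_poissonPMFReal s)).summable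
  refine ((hmoment a).mul_norm (hmoment b)).of_norm_bounded fun p => ?_
  simp only [norm_mul, Real.norm_eq_abs]
  rw [abs_of_pos (show (0 : ℝ) < p.1 + 1 by positivity),
    abs_of_pos (show (0 : ℝ) < p.2 + 1 by positivity)]
  calc |poissonPMFReal a p.1| * |poissonPMFReal b p.2| * |chiStat p.1 p.2|
      ≤ |poissonPMFReal a p.1| * |poissonPMFReal b p.2| * ((p.1 + 1) * (p.2 + 1)) := by
        gcongr
        exact abs_chiStat_le _ _
    _ = _ := by ring

theorem sum_antidiagonal_poissonPMFReal_mul_chiStat (a b : ℝ) (hab : a + b ≠ 0) (j : ℕ) :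
    ∑ p ∈ antidiagonal j, poissonPMFReal a p.1 * poissonPMFReal b p.2 * chiStat p.1 p.2 =
      ((a - b) / (a + b)) ^ 2 * (((j - 1 : ℕ) : ℝ) * poissonPMFReal (a + b) j) := by
  rcases eq_or_ne j 0 with rfl | hj
  · simp [chiStat]
  have hterm : ∀ x ∈ range (j + 1),
      poissonPMFReal a x * poissonPMFReal b (j - x) * chiStat x (j - x) =
        Real.exp (-(a + b)) / (j ! * j) *
          ((j.choose x : ℝ) * a ^ x * b ^ (j - x) * ((2 * x - j) ^ 2 - j)) := by
    intro x hx
    have hxj : x ≤ j := Nat.lt_succ_iff.mp (mem_range.mp hx)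
    rw [poissonPMFReal_mul_poissonPMFReal, Nat.add_sub_cancel' hxj, chiStat_sub hxj hj]
    field_simp
  have hj' : (j : ℝ) ≠ 0 := cast_ne_zero.mpr hj
  rw [Nat.sum_antidiagonal_eq_sum_range_succ_mk, sum_congr rfl hterm, ← mul_sum,
    cast_sub (one_le_iff_ne_zero.mpr hj), poissonPMFReal]
  field_simp
  linear_combination add_sq_mul_sum_range_choose_mul_two_mul_sub_sq_sub a b j

theorem tsum_tsum_poissonPMFReal_mul_chiStat (a b : ℝ) (hab : a + b ≠ 0) :
    ∑' (x : ℕ) (y : ℕ), poissonPMFReal a x * poissonPMFReal b y * chiStat x y =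
      ((a - b) / (a + b)) ^ 2 * (a + b - 1 + Real.exp (-(a + b))) := by
  rw [(summable_poissonPMFReal_mul_chiStat a b).tsum_tsum_eq_tsum_sum_antidiagonal]
  simp only [sum_antidiagonal_poissonPMFReal_mul_chiStat a b hab, tsum_mul_left,
    (hasSum_cast_pred_mul_poissonPMFReal (a + b)).tsum_eq]

theorem stmt_10_general (m : ℕ) (hm : 1 ≤ m) (p q : ℝ)
    (hpq : 0 < p + q) :
    ∑' x : ℕ, ∑' y : ℕ,
        poissonPMFReal (m * p) x * poissonPMFReal (m * q) y *
          (if 1 ≤ x + y then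
            (((x : ℝ) - (y : ℝ)) ^ 2 - ((x : ℝ) + (y : ℝ))) / ((x : ℝ) + (y : ℝ))
           else 0)
      = ((p - q) / (p + q)) ^ 2
          * ((m : ℝ) * (p + q) - 1 + Real.exp (-((m : ℝ) * (p + q)))) := by
  have hm0 : (m : ℝ) ≠ 0 := by positivity
  have h := tsum_tsum_poissonPMFReal_mul_chiStat (m * p) (m * q)
    (by rw [← mul_add]; exact mul_ne_zero hm0 hpq.ne')
  rwa [← mul_add, ← mul_sub, mul_div_mul_left _ _ hm0] at h

/-- Expectation of the chi-square-type statistic: with `X ~ Poisson(mp)`,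
`Y ~ Poisson(mq)` independent, `λ = m(p+q)`, and `δ = (p−q)/(p+q)`,
`E[((X−Y)² − J)/J · 1{J ≥ 1}] = δ² (λ − 1 + e^{-λ})` where `J = X+Y`. -/
theorem stmt_10 (m : ℕ) (hm : 1 ≤ m) (p q : ℝ)
    (hp : 0 ≤ p) (hq : 0 ≤ q) (hpq : 0 < p + q) :
    ∑' x : ℕ, ∑' y : ℕ,
        poissonPMFReal (m * p) x * poissonPMFReal (m * q) y *
          (if 1 ≤ x + y then
            (((x : ℝ) - (y : ℝ)) ^ 2 - ((x : ℝ) + (y : ℝ))) / ((x : ℝ) + (y : ℝ))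
           else 0)
      = ((p - q) / (p + q)) ^ 2
          * ((m : ℝ) * (p + q) - 1 + Real.exp (-((m : ℝ) * (p + q)))) :=
  stmt_10_general m hm p q hpq
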